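/- For effects a, b with 0 ≤ a, b ≤ I on a finite-dimensional Hilbert space, if b^{1/2} a^{1/2} ρ a^{1/2} b^{1/2} = (a^{1/2}ba^{1/2})^{1/2} ρ (a^{1/2}ba^{1/2})^{1/2} for all states ρ, then ab = ba. -/

import Mathlib

open scoped ComplexOrder

open Matrix BigOperators

/-- A state: positive operator of trace one. -/
def IsState {n : ℕ} (ρ : Matrix (Fin n) (Fin n) ℂ) : Prop :=
  ρ.PosSemidef ∧ ρ.trace = 1

namespace Matrix.PosSemidef

variable {m : Type*} [Fintype m] [DecidableEq m] {𝕜 : Type*} [RCLike 𝕜]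
  {A : Matrix m m 𝕜} (hA : A.PosSemidef)

/-- The positive semidefinite square root of a positive semidefinite matrix -/
noncomputable def sqrt : Matrix m m 𝕜 :=
  hA.1.eigenvectorUnitary.1 * diagonal ((↑) ∘ (√·) ∘ hA.1.eigenvalues) *
  (star hA.1.eigenvectorUnitary : Matrix m m 𝕜)

lemma posSemidef_sqrt : PosSemidef hA.sqrt := by
  apply PosSemidef.mul_mul_conjTranspose_same
  refine posSemidef_diagonal_iff.mpr fun i ↦ ?_
  rw [Function.comp_apply, RCLike.nonneg_iff]
  constructor
  · simp only [RCLike.ofReal_re]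
    exact Real.sqrt_nonneg _
  · simp only [RCLike.ofReal_im]

end Matrix.PosSemidef

lemma Matrix.PosSemidef.sqrt_mul_self {m : Type*} [Fintype m] [DecidableEq m] {𝕜 : Type*}
    [RCLike 𝕜] {A : Matrix m m 𝕜} (hA : A.PosSemidef) : hA.sqrt * hA.sqrt = A := by
  conv_rhs => rw [hA.1.spectral_theorem]
  rw [Unitary.conjStarAlgAut_apply]
  simp only [Matrix.PosSemidef.sqrt]
  have hu : (star hA.1.eigenvectorUnitary : Matrix m m 𝕜) * hA.1.eigenvectorUnitary.1 = 1 :=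
    Unitary.coe_star_mul_self _
  have hd : diagonal ((↑) ∘ (√·) ∘ hA.1.eigenvalues) * diagonal ((↑) ∘ (√·) ∘ hA.1.eigenvalues)
      = diagonal (RCLike.ofReal ∘ hA.1.eigenvalues : m → 𝕜) := by
    rw [diagonal_mul_diagonal]
    congr 1
    funext i
    simp only [Function.comp_apply]
    rw [← RCLike.ofReal_mul, Real.mul_self_sqrt (hA.eigenvalues_nonneg i)]
  calc _ = hA.1.eigenvectorUnitary.1 * (diagonal ((↑) ∘ (√·) ∘ hA.1.eigenvalues) *
        ((star hA.1.eigenvectorUnitary : Matrix m m 𝕜) * hA.1.eigenvectorUnitary.1) *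
        diagonal ((↑) ∘ (√·) ∘ hA.1.eigenvalues)) * (star hA.1.eigenvectorUnitary : Matrix m m 𝕜) := by
          simp only [mul_assoc]
    _ = _ := by rw [hu, mul_one, hd]

/-- `a^{1/2} b a^{1/2}` is positive semidefinite. -/
lemma posSemidef_sqrt_mul_mul_sqrt {n : ℕ} {a b : Matrix (Fin n) (Fin n) ℂ}
    (ha : a.PosSemidef) (hb : b.PosSemidef) :
    (ha.sqrt * b * ha.sqrt).PosSemidef := by
  have h := hb.conjTranspose_mul_mul_same ha.sqrt
  rwa [ha.posSemidef_sqrt.1.eq] at h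

open scoped Matrix.Norms.L2Operator

noncomputable instance matrixCStarAlgebra (n : ℕ) :
    CStarAlgebra (Matrix (Fin n) (Fin n) ℂ) := Matrix.instCStarAlgebra

set_option maxHeartbeats 1000000 in
/-- A product of two PSD matrices which is normal is self-adjoint, hence the factors commute. -/
lemma psd_mul_psd_normal_commute {n : ℕ} {P Q : Matrix (Fin n) (Fin n) ℂ}
    (hP : P.PosSemidef) (hQ : Q.PosSemidef)
    (hn : star (P * Q) * (P * Q) = (P * Q) * star (P * Q)) :
    P * Q = Q * P := by
  haveI : IsStarNormal (P * Q) := ⟨hn⟩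
  set M := hP.sqrt with hM
  have hMM : M * M = P := hP.sqrt_mul_self
  have hMherm : M.IsHermitian := hP.posSemidef_sqrt.1
  have hMQM : (M * Q * M).PosSemidef := by
    have := hQ.conjTranspose_mul_mul_same M
    rwa [hMherm.eq] at this
  have hsaMQM : IsSelfAdjoint (M * Q * M) := hMQM.1
  have hrestr : SpectrumRestricts (P * Q) Complex.reCLM := by
    refine .of_rightInvOn Complex.ofReal_re fun z hz => ?_
    rcases eq_or_ne z 0 with rfl | hz0
    · simp
    · have h1 : z ∈ spectrum ℂ (M * (M * Q)) \ {0} := by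
        refine ⟨?_, hz0⟩
        rwa [← mul_assoc, hMM]
      rw [spectrum.nonzero_mul_comm] at h1
      have h2 : z ∈ spectrum ℂ (M * Q * M) := h1.1
      exact hsaMQM.spectrumRestricts.rightInvOn h2
  have hsa : IsSelfAdjoint (P * Q) := hrestr.isSelfAdjoint _
  have h3 : star (P * Q) = P * Q := hsa
  rw [StarMul.star_mul, show star Q = Q from hQ.1.eq, show star P = P from hP.1.eq] at h3
  exact h3.symm

lemma maximally_mixed_isState {n : ℕ} (hn : 0 < n) :
    IsState ((n : ℂ)⁻¹ • (1 : Matrix (Fin n) (Fin n) ℂ)) := by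
  have hc : (0:ℂ) ≤ (n : ℂ)⁻¹ := by
    rw [show ((n:ℂ))⁻¹ = (((n:ℝ)⁻¹ : ℝ) : ℂ) by push_cast; ring]
    rw [Complex.zero_le_real]
    positivity
  constructor
  · constructor
    · unfold Matrix.IsHermitian
      rw [conjTranspose_smul, conjTranspose_one]
      congr 1
      simp [Complex.star_def]
    · intro x
      exact ((Matrix.PosSemidef.one (n := Fin n) (R := ℂ)).smul hc).2 x
  · rw [trace_smul, trace_one, smul_eq_mul]
    simp [Finset.card_univ]
    exact inv_mul_cancel₀ (by exact_mod_cast hn.ne')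

/-- for effects `a, b`, if
`b^{1/2} a^{1/2} ρ a^{1/2} b^{1/2} = (a^{1/2}ba^{1/2})^{1/2} ρ (a^{1/2}ba^{1/2})^{1/2}`
for all states `ρ` (the identity arising from `𝓛^a ∘ 𝓛^b = 𝓛^(a[𝓛^a]b)`), then
`ab = ba`. -/
theorem commute_of_luders_comp_eq_luders {n : ℕ}
    (a b : Matrix (Fin n) (Fin n) ℂ)
    (ha : a.PosSemidef) (ha' : (1 - a).PosSemidef)
    (hb : b.PosSemidef) (hb' : (1 - b).PosSemidef)
    (h : ∀ ρ : Matrix (Fin n) (Fin n) ℂ, IsState ρ →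
      hb.sqrt * ha.sqrt * ρ * ha.sqrt * hb.sqrt =
        (posSemidef_sqrt_mul_mul_sqrt ha hb).sqrt * ρ *
          (posSemidef_sqrt_mul_mul_sqrt ha hb).sqrt) :
    a * b = b * a := by
  rcases Nat.eq_zero_or_pos n with rfl | hn
  · exact Subsingleton.elim _ _
  set A := ha.sqrt with hA
  set B := hb.sqrt with hB
  have hAA : A * A = a := ha.sqrt_mul_self
  have hBB : B * B = b := hb.sqrt_mul_self
  set S := (posSemidef_sqrt_mul_mul_sqrt ha hb).sqrt with hS
  have hSS : S * S = A * b * A := (posSemidef_sqrt_mul_mul_sqrt ha hb).sqrt_mul_self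
  have key := h _ (maximally_mixed_isState hn)
  have hc : ((n:ℂ))⁻¹ ≠ 0 := by
    simp [Nat.cast_ne_zero, hn.ne']
  have key2 : B * A * A * B = S * S := by
    have e1 : B * A * ((n : ℂ)⁻¹ • (1 : Matrix (Fin n) (Fin n) ℂ)) * A * B
        = (n:ℂ)⁻¹ • (B * A * A * B) := by
      rw [Matrix.mul_smul, Matrix.mul_one, Matrix.smul_mul, Matrix.smul_mul]
    have e2 : S * ((n : ℂ)⁻¹ • (1 : Matrix (Fin n) (Fin n) ℂ)) * S
        = (n:ℂ)⁻¹ • (S * S) := by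
      rw [Matrix.mul_smul, Matrix.mul_one, Matrix.smul_mul]
    rw [e1, e2] at key
    exact smul_right_injective _ hc key
  have hnormal : star (A * B) * (A * B) = (A * B) * star (A * B) := by
    have hstar : star (A * B) = B * A := by
      rw [StarMul.star_mul, show star B = B from hb.posSemidef_sqrt.1.eq,
        show star A = A from ha.posSemidef_sqrt.1.eq]
    rw [hstar]
    calc B * A * (A * B) = B * A * A * B := by rw [← mul_assoc]
      _ = S * S := key2
      _ = A * b * A := hSS
      _ = A * B * (B * A) := by rw [← hBB]; noncomm_ring
  have hcomm : A * B = B * A :=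
    psd_mul_psd_normal_commute ha.posSemidef_sqrt hb.posSemidef_sqrt hnormal
  have hcAB : Commute A B := hcomm
  have : Commute (A * A) (B * B) := (hcAB.mul_left hcAB).mul_right (hcAB.mul_left hcAB)
  rwa [hAA, hBB] at this
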